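/- arXiv:1906.02456 — 3 statements merged into one kernel-verified Lean document; each statement's English description precedes it below -/
import Mathlib

section
/- Let A and B be n×n matrices with entries in ℤ ∪ {∞} and D a symmetric n×n integer matrix. Define a tripartite weighted graph G on vertex sets I, J, K each a copy of [n], with edge weights f(i,k)=A[i,k] for i∈I,k∈K, f(k,j)=B[k,j] for j∈J,k∈K, and f(i,j)=-D[i,j] for i∈I,j∈J. Then for any i∈I and j∈J, the pair {i,j} is contained in a negative triangle of G (a triple of mutually adjacent vertices whose edge weights sum to a negative value) if and only if min over k∈[n] of (A[i,k]+B[k,j]) < D[i,j]. -/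
/-- Edge weights of the tripartite graph built from matrices `A`, `B` and the symmetric
integer matrix `D` (weight `⊤` means "no edge"). -/
def tripartiteWeight {n : ℕ} (A B : Fin n → Fin n → WithTop ℤ)
    (D : Fin n → Fin n → ℤ) :
    Fin n ⊕ Fin n ⊕ Fin n → Fin n ⊕ Fin n ⊕ Fin n → WithTop ℤ
  | Sum.inl i, Sum.inr (Sum.inr k) => A i k
  | Sum.inr (Sum.inr k), Sum.inl i => A i k
  | Sum.inr (Sum.inl j), Sum.inr (Sum.inr k) => B k j
  | Sum.inr (Sum.inr k), Sum.inr (Sum.inl j) => B k j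
  | Sum.inl i, Sum.inr (Sum.inl j) => ((-D i j : ℤ) : WithTop ℤ)
  | Sum.inr (Sum.inl j), Sum.inl i => ((-D i j : ℤ) : WithTop ℤ)
  | _, _ => ⊤

/-- `{u,v,w}` is a negative triangle for the weight function `f`: the three edge weights
exist (are finite) and sum to a negative value. -/
def IsNegTriangle {V : Type*} (f : V → V → WithTop ℤ) (u v w : V) : Prop :=
  f u v + f u w + f v w < 0

theorem stmt0 {n : ℕ} (A B : Fin n → Fin n → WithTop ℤ) (D : Fin n → Fin n → ℤ)
    (hD : ∀ i j, D i j = D j i) (i j : Fin n) :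
    (∃ w : Fin n ⊕ Fin n ⊕ Fin n,
        IsNegTriangle (tripartiteWeight A B D) (Sum.inl i) (Sum.inr (Sum.inl j)) w) ↔
      Finset.univ.inf (fun k => A i k + B k j) < ((D i j : ℤ) : WithTop ℤ) := by
  rw [Finset.inf_lt_iff]
  constructor
  · rintro ⟨w, hw⟩
    unfold IsNegTriangle at hw
    match w with
    | Sum.inl i' => simp [tripartiteWeight] at hw
    | Sum.inr (Sum.inl j') => simp [tripartiteWeight] at hw
    | Sum.inr (Sum.inr k) =>
      refine ⟨k, Finset.mem_univ k, ?_⟩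
      simp only [tripartiteWeight] at hw
      cases' hA : A i k with a
      · simp [hA] at hw
      cases' hB : B k j with b
      · simp [hA, hB] at hw
      rw [hA, hB] at hw
      norm_cast at hw ⊢
      linarith
  · rintro ⟨k, -, hk⟩
    refine ⟨Sum.inr (Sum.inr k), ?_⟩
    unfold IsNegTriangle
    simp only [tripartiteWeight]
    cases' hA : A i k with a
    · simp [hA] at hk
    cases' hB : B k j with b
    · simp [hA, hB] at hk
    rw [hA, hB] at hk
    norm_cast at hk ⊢
    linarith
end

section
/- Let X be a finite set, m a positive integer, and for each i ∈ [m] let A_i^0, A_i^1 partition X with A_i^1 nonempty and |A_i^1| ≤ |X|/2. For b ∈ {0,1}^m, let |ψ^b⟩ = ⊗_{i=1}^m |ψ_i^{b_i}⟩, where |ψ_i^c⟩ is the uniform-amplitude unit vector over A_i^c in ℂ^X. Let β > 8m/|X| and suppose A_1^1 × ⋯ × A_m^1 ⊆ Υ_{β/2}(m,X), where Υ_γ(m,X) is the set of tuples (x_1,…,x_m) ∈ X^m in which every element of X appears at most γ times. Let Π be the orthogonal projection of (ℂ^X)^{⊗m} onto the span of basis vectors |x_1⟩⊗⋯⊗|x_m⟩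 with (x_1,…,x_m) ∉ Υ_β(m,X). Then for every unit vector |φ⟩ in the span of {|ψ^b⟩ : b ∈ {0,1}^m}, one has ‖Π|φ⟩‖² < |X|·exp(−2m/(9|X|)). -/
open scoped BigOperators Classical

/-- `Aset A1 true = A1` (the solution set `A¹`) and `Aset A1 false = A1ᶜ` (the set `A⁰`). -/
def Aset {X : Type*} [Fintype X] [DecidableEq X] (A1 : Finset X) : Bool → Finset X
  | true => A1
  | false => A1ᶜ

/-- The state `|ψ^b⟩ = ⊗ᵢ |ψᵢ^{bᵢ}⟩`, where `|ψᵢ^c⟩` is the uniform-amplitude unit vector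
supported on `Aᵢ^c`.  A tensor of uniform superpositions, written in coordinates. -/
noncomputable def psiState {X : Type*} [Fintype X] [DecidableEq X] {m : ℕ}
    (A1 : Fin m → Finset X) (b : Fin m → Bool) : EuclideanSpace ℂ (Fin m → X) :=
  WithLp.toLp 2 fun x => ∏ i, if x i ∈ Aset (A1 i) (b i)
    then (((Real.sqrt ((Aset (A1 i) (b i)).card))⁻¹ : ℝ) : ℂ) else 0

/-- `Υ_γ(m, X)`: tuples in `X^m` in which every element of `X` appears at most `γ` times. -/
def Upsilon (m : ℕ) (X : Type*) [Fintype X] [DecidableEq X] (γ : ℝ) : Set (Fin m → X) :=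
  {x | ∀ a : X, ((Finset.univ.filter fun i => x i = a).card : ℝ) ≤ γ}

/-- The orthogonal projection onto the span of the basis vectors indexed by tuples
outside `Υ_β(m, X)`, written in coordinates. -/
noncomputable def badProj {X : Type*} [Fintype X] [DecidableEq X] {m : ℕ} (β : ℝ)
    (φ : EuclideanSpace ℂ (Fin m → X)) : EuclideanSpace ℂ (Fin m → X) :=
  WithLp.toLp 2 fun x => if x ∈ Upsilon m X β then 0 else φ x


/-!
The states `ψ^b` are uniform on the pairwise disjoint boxes `∏ᵢ Aᵢ^{bᵢ}`, and `Π` only zeroes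
coordinates, so both the `ψ^b` and the `Π ψ^b` are pairwise orthogonal; for `φ = ∑ c_b ψ^b` both
`‖Π φ‖²` and `‖φ‖²` are then weighted sums over `b`, and it suffices to show that less than a
fraction `|X| e^{-2m/(9|X|)}` of each box lies outside `Υ_β`.

Fix `a ∈ X`. By `A¹ ⊆ Υ_{β/2}`, a tuple of the box in which `a` occurs more than `β` times has
more than `β/2` occurrences among the coordinates with `bᵢ = 0`. As `|Aᵢ⁰| ≥ |X|/2`, the
exponential moment `∑ 2^{#occurrences}` over the box is at most `|box| e^{2m/|X|}`, so by Markov's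
inequality and `4 log 2 > 20/9` such tuples form less than a fraction `e^{-2m/(9|X|)}` of the box.
A union bound over `a` finishes.
-/

open Finset

section Orthogonal
variable {𝕜 E ι : Type*} [RCLike 𝕜] [NormedAddCommGroup E] [InnerProductSpace 𝕜 E] [Fintype ι]

theorem norm_sum_smul_sq_of_pairwise_inner_eq_zero {w : ι → E}
    (hw : Pairwise fun i j => inner 𝕜 (w i) (w j) = 0) (c : ι → 𝕜) :
    ‖∑ i, c i • w i‖ ^ 2 = ∑ i, ‖c i‖ ^ 2 * ‖w i‖ ^ 2 := by
  rw [← RCLike.ofReal_inj (K := 𝕜)]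
  push_cast
  rw [← inner_self_eq_norm_sq_to_K, sum_inner]
  refine sum_congr rfl fun i _ => ?_
  have hoff : ∀ j ≠ i, inner 𝕜 (c i • w i) (c j • w j) = 0 := fun j hji => by
    simp [inner_smul_left, inner_smul_right, hw hji.symm]
  rw [inner_sum, sum_eq_single i (fun j _ => hoff j) (by simp), inner_smul_left, inner_smul_right,
    inner_self_eq_norm_sq_to_K, ← mul_assoc, RCLike.conj_mul]

theorem norm_map_sq_lt_of_pairwise_inner_eq_zero (P : E →ₗ[𝕜] E) {v : ι → E}
    (hv : Pairwise fun i j => inner 𝕜 (v i) (v j) = 0)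
    (hPv : Pairwise fun i j => inner 𝕜 (P (v i)) (P (v j)) = 0)
    {M : ℝ} (hM : ∀ i, ‖P (v i)‖ ^ 2 < M * ‖v i‖ ^ 2)
    {φ : E} (hφ : φ ∈ Submodule.span 𝕜 (Set.range v)) (hφ0 : φ ≠ 0) :
    ‖P φ‖ ^ 2 < M * ‖φ‖ ^ 2 := by
  obtain ⟨c, rfl⟩ := (Submodule.mem_span_range_iff_exists_fun 𝕜).mp hφ
  obtain ⟨i, hi⟩ : ∃ i, c i ≠ 0 := by
    by_contra! h
    simp [h] at hφ0
  simp only [map_sum, map_smul, norm_sum_smul_sq_of_pairwise_inner_eq_zero hv,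
    norm_sum_smul_sq_of_pairwise_inner_eq_zero hPv, mul_sum]
  refine sum_lt_sum (fun j _ => ?_) ⟨i, mem_univ i, ?_⟩
  · rw [mul_left_comm]; exact mul_le_mul_of_nonneg_left (hM j).le (by positivity)
  · rw [mul_left_comm]; exact mul_lt_mul_of_pos_left (hM i) (by positivity)

theorem EuclideanSpace.inner_eq_zero_of_forall_eq_zero_or {x y : EuclideanSpace 𝕜 ι}
    (h : ∀ i, x i = 0 ∨ y i = 0) : inner 𝕜 x y = 0 := by
  rw [PiLp.inner_apply]
  exact sum_eq_zero fun i _ => by rcases h i with h | h <;> simp [h]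

end Orthogonal

section Chernoff
variable {ι X : Type*} [Fintype ι] [DecidableEq ι] [DecidableEq X]

lemma two_pow_card_filter_eq_prod (T : Finset ι) (a : X) (x : ι → X) :
    (2 : ℝ) ^ #{i ∈ T | x i = a} = ∏ i, if i ∈ T ∧ x i = a then 2 else 1 := by
  rw [← prod_const, ← prod_filter]
  congr 1
  ext i
  simp

lemma sum_ite_eq_two_le (s : Finset X) (a : X) :
    ∑ y ∈ s, (if y = a then (2 : ℝ) else 1) ≤ #s + 1 := by
  calc ∑ y ∈ s, (if y = a then (2 : ℝ) else 1) = ∑ y ∈ s, (1 + if y = a then 1 else 0) :=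
        sum_congr rfl fun y _ => by split_ifs <;> norm_num
    _ = #s + if a ∈ s then 1 else 0 := by rw [sum_add_distrib, sum_ite_eq']; simp
    _ ≤ #s + 1 := by split_ifs <;> norm_num

lemma sum_two_pow_card_filter_le (S : ι → Finset X) (T : Finset ι) (a : X) {n : ℝ}
    (hn : 0 < n) (hS : ∀ i ∈ T, n ≤ #(S i)) :
    ∑ x ∈ Fintype.piFinset S, (2 : ℝ) ^ #{i ∈ T | x i = a} ≤
      #(Fintype.piFinset S) * Real.exp (#T / n) := by
  have hfactor : ∀ i, ∑ y ∈ S i, (if i ∈ T ∧ y = a then (2 : ℝ) else 1) ≤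
      #(S i) * Real.exp (if i ∈ T then 1 / n else 0) := by
    intro i
    by_cases hi : i ∈ T
    · simp only [hi, true_and, if_true]
      have hexp := Real.add_one_le_exp (1 / n)
      have hcard : 1 ≤ #(S i) * (1 / n) := by
        rw [mul_one_div, le_div_iff₀ hn, one_mul]; exact hS i hi
      nlinarith [sum_ite_eq_two_le (S i) a]
    · simp [hi]
  calc ∑ x ∈ Fintype.piFinset S, (2 : ℝ) ^ #{i ∈ T | x i = a}
      = ∏ i, ∑ y ∈ S i, (if i ∈ T ∧ y = a then (2 : ℝ) else 1) := by
        rw [prod_univ_sum]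
        exact sum_congr rfl fun x _ => two_pow_card_filter_eq_prod T a x
    _ ≤ ∏ i, (#(S i) * Real.exp (if i ∈ T then 1 / n else 0)) :=
        prod_le_prod (fun i _ => sum_nonneg fun y _ => by split_ifs <;> norm_num)
          fun i _ => hfactor i
    _ = #(Fintype.piFinset S) * Real.exp (#T / n) := by
        rw [prod_mul_distrib, ← Real.exp_sum, sum_ite_mem, univ_inter, sum_const, nsmul_eq_mul,
          Fintype.card_piFinset]
        push_cast
        rw [mul_one_div]

end Chernoff

lemma exp_div_two_rpow_lt {m q β : ℝ} (hm : 0 ≤ m) (hq : 0 < q) (hβ : 8 * m / q < β) :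
    Real.exp (2 * m / q) / 2 ^ (β / 2) < Real.exp (-(2 * m) / (9 * q)) := by
  have ht : 0 ≤ m / q := div_nonneg hm hq.le
  have hβ' : 4 * (m / q) < β / 2 := by rw [mul_div_assoc] at hβ; linarith
  have hlog : 5 / 9 < Real.log 2 := by linarith [Real.log_two_gt_d9]
  have hlogβ : 20 / 9 * (m / q) < Real.log 2 * (β / 2) := by nlinarith
  rw [Real.rpow_def_of_pos two_pos, ← Real.exp_sub, Real.exp_lt_exp]
  have e1 : 2 * m / q = 2 * (m / q) := by ring
  have e2 : -(2 * m) / (9 * q) = -(2 / 9) * (m / q) := by field_simp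
  rw [e1, e2]
  linarith

section PsiState
variable {X : Type*} [Fintype X] [DecidableEq X] {m : ℕ}

def psiSupport (A1 : Fin m → Finset X) (b : Fin m → Bool) : Finset (Fin m → X) :=
  Fintype.piFinset fun i => Aset (A1 i) (b i)

lemma mem_Aset_iff {A : Finset X} {c : Bool} {x : X} : x ∈ Aset A c ↔ decide (x ∈ A) = c := by
  cases c <;> simp [Aset]

lemma Aset_nonempty {A : Finset X} (hA : A.Nonempty) (hhalf : 2 * #A ≤ Fintype.card X)
    (c : Bool) : (Aset A c).Nonempty := by
  cases c
  · rw [Aset, ← card_pos, card_compl]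
    have := hA.card_pos
    omega
  · exact hA

lemma half_card_le_card_Aset_false {A : Finset X} (hhalf : 2 * #A ≤ Fintype.card X) :
    (Fintype.card X : ℝ) / 2 ≤ #(Aset A false) := by
  have hcard : (#A : ℝ) + #(Aset A false) = Fintype.card X := by
    exact_mod_cast card_add_card_compl A
  have hhalf' : (2 * #A : ℝ) ≤ Fintype.card X := by exact_mod_cast hhalf
  linarith

lemma eq_of_mem_psiSupport {A1 : Fin m → Finset X} {b b' : Fin m → Bool} {x : Fin m → X}
    (hb : x ∈ psiSupport A1 b) (hb' : x ∈ psiSupport A1 b') : b = b' := by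
  simp only [psiSupport, Fintype.mem_piFinset, mem_Aset_iff] at hb hb'
  exact funext fun i => (hb i).symm.trans (hb' i)

lemma psiState_apply_eq_zero {A1 : Fin m → Finset X} {b : Fin m → Bool} {x : Fin m → X}
    (hx : x ∉ psiSupport A1 b) : psiState A1 b x = 0 := by
  obtain ⟨i, hi⟩ : ∃ i, x i ∉ Aset (A1 i) (b i) := by
    simpa [psiSupport, Fintype.mem_piFinset] using hx
  exact prod_eq_zero (mem_univ i) (if_neg hi)

lemma norm_psiState_apply_sq (A1 : Fin m → Finset X) (b : Fin m → Bool) (x : Fin m → X) :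
    ‖psiState A1 b x‖ ^ 2 = if x ∈ psiSupport A1 b then (#(psiSupport A1 b) : ℝ)⁻¹ else 0 := by
  split_ifs with hx
  · have hx' := Fintype.mem_piFinset.mp hx
    simp only [psiState, psiSupport, Fintype.card_piFinset, norm_prod, ← prod_pow, if_pos (hx' _),
      Complex.norm_real, Real.norm_eq_abs, sq_abs, inv_pow, Real.sq_sqrt (Nat.cast_nonneg _)]
    push_cast
    rw [prod_inv_distrib]
  · simp [psiState_apply_eq_zero hx]

lemma sum_norm_psiState_apply_sq (A1 : Fin m → Finset X) (b : Fin m → Bool)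
    (s : Finset (Fin m → X)) :
    ∑ x ∈ s, ‖psiState A1 b x‖ ^ 2 = #(s ∩ psiSupport A1 b) / #(psiSupport A1 b) := by
  simp only [norm_psiState_apply_sq, ← sum_filter, sum_const, nsmul_eq_mul, filter_mem_eq_inter,
    div_eq_mul_inv]

lemma psiSupport_nonempty {A1 : Fin m → Finset X} (hne : ∀ i, (A1 i).Nonempty)
    (hhalf : ∀ i, 2 * #(A1 i) ≤ Fintype.card X) (b : Fin m → Bool) :
    (psiSupport A1 b).Nonempty :=
  Fintype.piFinset_nonempty.mpr fun i => Aset_nonempty (hne i) (hhalf i) (b i)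

lemma psiState_apply_eq_zero_or {A1 : Fin m → Finset X} {b b' : Fin m → Bool} (hbb' : b ≠ b')
    (x : Fin m → X) : psiState A1 b x = 0 ∨ psiState A1 b' x = 0 := by
  by_contra! h
  exact hbb' (eq_of_mem_psiSupport (not_imp_comm.mp psiState_apply_eq_zero h.1)
    (not_imp_comm.mp psiState_apply_eq_zero h.2))

lemma norm_psiState_sq {A1 : Fin m → Finset X} {b : Fin m → Bool}
    (hb : (psiSupport A1 b).Nonempty) : ‖psiState A1 b‖ ^ 2 = 1 := by
  rw [EuclideanSpace.norm_sq_eq, sum_norm_psiState_apply_sq, univ_inter,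
    div_self (Nat.cast_ne_zero.mpr hb.card_pos.ne')]

end PsiState

section Occupancy
variable {X : Type*} [Fintype X] [DecidableEq X] {m : ℕ} {A1 : Fin m → Finset X}

lemma card_filter_true_and_eq_le (hne : ∀ i, (A1 i).Nonempty) {β : ℝ}
    (hsub : ∀ x : Fin m → X, (∀ i, x i ∈ A1 i) → x ∈ Upsilon m X (β / 2))
    {b : Fin m → Bool} {x : Fin m → X} (hx : x ∈ psiSupport A1 b) (a : X) :
    (#{i | b i = true ∧ x i = a} : ℝ) ≤ β / 2 := by
  set y : Fin m → X := fun i => if b i then x i else (hne i).choose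
  have hy : ∀ i, y i ∈ A1 i := by
    intro i
    by_cases hb : b i
    · simpa [y, hb, Aset] using Fintype.mem_piFinset.mp hx i
    · simpa [y, hb] using (hne i).choose_spec
  refine le_trans ?_ (hsub y hy a)
  exact_mod_cast card_le_card fun i hi => by
    simp only [mem_filter, mem_univ, true_and] at hi ⊢
    simp [y, hi.1, hi.2]

lemma half_lt_card_filter_false_of_lt (hne : ∀ i, (A1 i).Nonempty) {β : ℝ}
    (hsub : ∀ x : Fin m → X, (∀ i, x i ∈ A1 i) → x ∈ Upsilon m X (β / 2))
    {b : Fin m → Bool} {x : Fin m → X} (hx : x ∈ psiSupport A1 b) {a : X}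
    (hxa : β < #{i | x i = a}) :
    β / 2 < #{i ∈ univ.filter (b · = false) | x i = a} := by
  have hsplit : #{i | x i = a} ≤ #{i | b i = true ∧ x i = a} +
      #{i ∈ univ.filter (b · = false) | x i = a} := by
    refine (card_le_card fun i hi => ?_).trans (card_union_le _ _)
    cases hb : b i <;> simp_all
  have htrue := card_filter_true_and_eq_le hne hsub hx a
  have hsplit' : (#{i | x i = a} : ℝ) ≤ #{i | b i = true ∧ x i = a} +
      #{i ∈ univ.filter (b · = false) | x i = a} := by exact_mod_cast hsplit
  linarith

lemma card_filter_psiSupport_lt_card_filter_eq_lt (hne : ∀ i, (A1 i).Nonempty)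
    (hhalf : ∀ i, 2 * #(A1 i) ≤ Fintype.card X) {β : ℝ}
    (hβ : 8 * m / (Fintype.card X : ℝ) < β)
    (hsub : ∀ x : Fin m → X, (∀ i, x i ∈ A1 i) → x ∈ Upsilon m X (β / 2))
    (b : Fin m → Bool) (a : X) :
    (#{x ∈ psiSupport A1 b | β < #{i | x i = a}} : ℝ) <
      Real.exp (-(2 * m) / (9 * Fintype.card X)) * #(psiSupport A1 b) := by
  set q : ℝ := (Fintype.card X : ℝ)
  set G := psiSupport A1 b
  set T : Finset (Fin m) := univ.filter (b · = false)
  have hq : 0 < q := Nat.cast_pos.mpr (Fintype.card_pos_iff.mpr ⟨a⟩)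
  have hG : (0 : ℝ) < #G := Nat.cast_pos.mpr (psiSupport_nonempty hne hhalf b).card_pos
  have hmgf : ∑ x ∈ G, (2 : ℝ) ^ #{i ∈ T | x i = a} ≤ #G * Real.exp (2 * m / q) := by
    refine (sum_two_pow_card_filter_le _ T a (half_pos hq) fun i hi => ?_).trans ?_
    · rw [(mem_filter.mp hi).2]
      exact half_card_le_card_Aset_false (hhalf i)
    · refine mul_le_mul_of_nonneg_left (Real.exp_le_exp.mpr ?_) (Nat.cast_nonneg _)
      rw [div_div_eq_mul_div, mul_comm]
      gcongr
      exact_mod_cast (card_le_univ T).trans (Fintype.card_fin m).le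
  have hmarkov : (#{x ∈ G | β < #{i | x i = a}} : ℝ) * 2 ^ (β / 2) ≤
      ∑ x ∈ G, (2 : ℝ) ^ #{i ∈ T | x i = a} := by
    rw [← nsmul_eq_mul]
    refine (card_nsmul_le_sum _ _ _ fun x hx => ?_).trans
      (sum_le_sum_of_subset_of_nonneg (filter_subset _ _) fun _ _ _ => by positivity)
    obtain ⟨hxG, hxa⟩ := mem_filter.mp hx
    rw [← Real.rpow_natCast]
    exact Real.rpow_le_rpow_of_exponent_le one_le_two
      (half_lt_card_filter_false_of_lt hne hsub hxG hxa).le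
  calc (#{x ∈ G | β < #{i | x i = a}} : ℝ)
      ≤ #G * Real.exp (2 * m / q) / 2 ^ (β / 2) := by
        rw [le_div_iff₀ (by positivity)]; exact hmarkov.trans hmgf
    _ < #G * Real.exp (-(2 * m) / (9 * q)) := by
        rw [mul_div_assoc]
        exact mul_lt_mul_of_pos_left (exp_div_two_rpow_lt (Nat.cast_nonneg m) hq hβ) hG
    _ = Real.exp (-(2 * m) / (9 * q)) * #G := mul_comm _ _

lemma card_filter_psiSupport_not_mem_Upsilon_lt (hm : 0 < m) (hne : ∀ i, (A1 i).Nonempty)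
    (hhalf : ∀ i, 2 * #(A1 i) ≤ Fintype.card X) {β : ℝ}
    (hβ : 8 * m / (Fintype.card X : ℝ) < β)
    (hsub : ∀ x : Fin m → X, (∀ i, x i ∈ A1 i) → x ∈ Upsilon m X (β / 2))
    (b : Fin m → Bool) :
    (#{x ∈ psiSupport A1 b | x ∉ Upsilon m X β} : ℝ) <
      Fintype.card X * Real.exp (-(2 * m) / (9 * Fintype.card X)) * #(psiSupport A1 b) := by
  have : Nonempty X := ⟨(hne ⟨0, hm⟩).choose⟩
  have hunion : {x ∈ psiSupport A1 b | x ∉ Upsilon m X β} ⊆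
      univ.biUnion fun a => {x ∈ psiSupport A1 b | β < #{i | x i = a}} := by
    intro x hx
    obtain ⟨hxG, hxΥ⟩ := mem_filter.mp hx
    obtain ⟨a, ha⟩ : ∃ a, β < #{i | x i = a} := by simpa [Upsilon] using hxΥ
    exact mem_biUnion.mpr ⟨a, mem_univ a, mem_filter.mpr ⟨hxG, ha⟩⟩
  calc (#{x ∈ psiSupport A1 b | x ∉ Upsilon m X β} : ℝ)
      ≤ ∑ a, (#{x ∈ psiSupport A1 b | β < #{i | x i = a}} : ℝ) := by
        exact_mod_cast (card_le_card hunion).trans card_biUnion_le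
    _ < ∑ _a : X, Real.exp (-(2 * m) / (9 * Fintype.card X)) * #(psiSupport A1 b) :=
        sum_lt_sum_of_nonempty univ_nonempty fun a _ =>
          card_filter_psiSupport_lt_card_filter_eq_lt hne hhalf hβ hsub b a
    _ = _ := by rw [sum_const, card_univ, nsmul_eq_mul, mul_assoc]

end Occupancy

section Projection
variable {X : Type*} [Fintype X] [DecidableEq X] {m : ℕ}

noncomputable def badProjₗ (β : ℝ) :
    EuclideanSpace ℂ (Fin m → X) →ₗ[ℂ] EuclideanSpace ℂ (Fin m → X) where
  toFun := badProj β
  map_add' φ ψ := by ext x; by_cases hx : x ∈ Upsilon m X β <;> simp [badProj, hx]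
  map_smul' c φ := by ext x; by_cases hx : x ∈ Upsilon m X β <;> simp [badProj, hx]

lemma badProj_apply_eq_zero {β : ℝ} {φ : EuclideanSpace ℂ (Fin m → X)} {x : Fin m → X}
    (hx : φ x = 0) : badProj β φ x = 0 := by
  simp [badProj, hx]

lemma norm_badProj_sq (β : ℝ) (φ : EuclideanSpace ℂ (Fin m → X)) :
    ‖badProj β φ‖ ^ 2 = ∑ x ∈ univ.filter (· ∉ Upsilon m X β), ‖φ x‖ ^ 2 := by
  rw [EuclideanSpace.norm_sq_eq, sum_filter]
  refine sum_congr rfl fun x _ => ?_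
  by_cases hx : x ∈ Upsilon m X β <;> simp [badProj, hx]

lemma norm_badProj_psiState_sq (β : ℝ) (A1 : Fin m → Finset X) (b : Fin m → Bool) :
    ‖badProj β (psiState A1 b)‖ ^ 2 =
      #{x ∈ psiSupport A1 b | x ∉ Upsilon m X β} / #(psiSupport A1 b) := by
  rw [norm_badProj_sq, sum_norm_psiState_apply_sq, filter_inter, univ_inter]

end Projection

theorem stmt7 {X : Type*} [Fintype X] [DecidableEq X] {m : ℕ} (hm : 0 < m)
    (A1 : Fin m → Finset X) (hne : ∀ i, (A1 i).Nonempty)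
    (hhalf : ∀ i, 2 * (A1 i).card ≤ Fintype.card X)
    (β : ℝ) (hβ : 8 * m / (Fintype.card X : ℝ) < β)
    (hsub : ∀ x : Fin m → X, (∀ i, x i ∈ A1 i) → x ∈ Upsilon m X (β / 2))
    (φ : EuclideanSpace ℂ (Fin m → X))
    (hφ : φ ∈ Submodule.span ℂ (Set.range (psiState A1)))
    (hφ1 : ‖φ‖ = 1) :
    ‖badProj β φ‖ ^ 2 <
      (Fintype.card X : ℝ) * Real.exp (-(2 * m) / (9 * Fintype.card X)) := by
  have hψ : ∀ b, ‖badProjₗ β (psiState A1 b)‖ ^ 2 <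
      Fintype.card X * Real.exp (-(2 * m) / (9 * Fintype.card X)) * ‖psiState A1 b‖ ^ 2 := by
    intro b
    have hb := psiSupport_nonempty hne hhalf b
    rw [norm_psiState_sq hb, mul_one]
    change ‖badProj β _‖ ^ 2 < _
    rw [norm_badProj_psiState_sq, div_lt_iff₀ (Nat.cast_pos.mpr hb.card_pos)]
    exact card_filter_psiSupport_not_mem_Upsilon_lt hm hne hhalf hβ hsub b
  have h := norm_map_sq_lt_of_pairwise_inner_eq_zero (badProjₗ β)
    (fun b b' hbb' => EuclideanSpace.inner_eq_zero_of_forall_eq_zero_or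
      (psiState_apply_eq_zero_or hbb'))
    (fun b b' hbb' => EuclideanSpace.inner_eq_zero_of_forall_eq_zero_or fun x =>
      (psiState_apply_eq_zero_or hbb' x).imp badProj_apply_eq_zero badProj_apply_eq_zero)
    hψ hφ (norm_ne_zero_iff.mp (hφ1.symm ▸ one_ne_zero))
  rwa [hφ1, one_pow, mul_one] at h
end

section
/- Let G=(V,E,f) be a weighted graph on n vertices in which some pair {u,v} is contained in more than n/2^{i+1} negative triangles, for some i ≥ 0 with 60·2^i·log n ≤ n. Form G' by retaining each edge of G independently with probability q = √(60·2^i·log n / n), except that {u,v} itself is retained. Then the probability that {u,v} lies in no negative triangle of G' is less than exp(−(n/2^{i+1})·q²) = exp(−30·log n) ≤ 1/n^{30} (log natural). -/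
/-!
The event that the triangle `{u, v, w}` survives depends only on the two edges `{u, w}` and
`{v, w}`, and these pairs are disjoint for distinct `w`. Hence the survival events of the
negative triangles through `{u, v}` are independent, each of probability `q²`, and none survives
with probability `(1 - q²) ^ Γ ≤ exp (-Γ q²)`, where `Γ > n / 2 ^ (i + 1)`. The choice of `q`
makes `n / 2 ^ (i + 1) * q² = 30 log n`.
-/

open MeasureTheory ProbabilityTheory

/-- `{u,v,w}` is a negative triangle of the weighted graph `(G, f)`. -/
def NegTriangle {n : ℕ} (G : SimpleGraph (Fin n)) (f : Fin n → Fin n → ℤ)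
    (u v w : Fin n) : Prop :=
  G.Adj u v ∧ G.Adj u w ∧ G.Adj v w ∧ f u v + f u w + f v w < 0

theorem ProbabilityTheory.iIndep.measure_biInter_eq_prod_of_pairwiseDisjoint
    {Ω ι α : Type*} {mΩ : MeasurableSpace Ω} {μ : Measure Ω} [IsProbabilityMeasure μ]
    {m : ι → MeasurableSpace Ω} (h_le : ∀ i, m i ≤ mΩ) (h_indep : iIndep m μ)
    {S : α → Set ι} {E : α → Set Ω} (T : Finset α) (hS : (T : Set α).PairwiseDisjoint S)
    (hE : ∀ a ∈ T, MeasurableSet[⨆ i ∈ S a, m i] (E a)) :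
    μ (⋂ a ∈ T, E a) = ∏ a ∈ T, μ (E a) := by
  classical
  induction T using Finset.induction_on with
  | empty => simp
  | @insert a T haT ih =>
    have hdisj : Disjoint (S a) (⋃ b ∈ T, S b) :=
      Set.disjoint_iUnion₂_right.mpr fun b hb =>
        hS (by simp) (by simp [hb]) (fun h => haT (h ▸ hb))
    have hmono : ∀ b ∈ T, (⨆ i ∈ S b, m i) ≤ ⨆ i ∈ ⋃ b ∈ T, S b, m i := fun b hb =>
      biSup_mono fun i hi => Set.mem_biUnion hb hi
    have hrest : MeasurableSet[⨆ i ∈ ⋃ b ∈ T, S b, m i] (⋂ b ∈ T, E b) :=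
      Finset.measurableSet_biInter _ fun b hb => hmono b hb _ (hE b (by simp [hb]))
    rw [Finset.set_biInter_insert, Finset.prod_insert haT,
      ← ih (hS.subset (by simp)) fun b hb => hE b (by simp [hb])]
    exact (Indep_iff _ _ μ).mp (indep_iSup_of_disjoint h_le h_indep hdisj) _ _
      (hE a (by simp)) hrest

theorem ProbabilityTheory.iIndepFun.measure_not_and_eq {Ω ι : Type*} {mΩ : MeasurableSpace Ω}
    {μ : Measure Ω} [IsProbabilityMeasure μ] {K : ι → Ω → Bool} (hmeas : ∀ i, Measurable (K i))
    (hind : iIndepFun K μ) {i j : ι} (hij : i ≠ j) {p : ℝ} (hp : 0 ≤ p)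
    (hi : μ {ω | K i ω = true} = ENNReal.ofReal p) (hj : μ {ω | K j ω = true} = ENNReal.ofReal p) :
    μ {ω | ¬(K i ω = true ∧ K j ω = true)} = ENNReal.ofReal (1 - p ^ 2) := by
  have hinter : μ ({ω | K i ω = true} ∩ {ω | K j ω = true}) =
      μ {ω | K i ω = true} * μ {ω | K j ω = true} :=
    (hind.indepFun hij).measure_inter_preimage_eq_mul _ _
      (measurableSet_singleton true) (measurableSet_singleton true)
  have hmeas_inter : MeasurableSet ({ω | K i ω = true} ∩ {ω | K j ω = true}) :=
    (hmeas i (measurableSet_singleton true)).inter (hmeas j (measurableSet_singleton true))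
  change μ ({ω | K i ω = true} ∩ {ω | K j ω = true})ᶜ = _
  rw [prob_compl_eq_one_sub hmeas_inter, hinter, hi, hj, ← ENNReal.ofReal_mul hp, ← sq,
    ENNReal.ofReal_sub _ (sq_nonneg p), ENNReal.ofReal_one]

theorem Real.one_sub_pow_lt_exp_neg_mul {x c : ℝ} {k : ℕ} (hx0 : 0 < x) (hx1 : x ≤ 1)
    (hc : c < k) : (1 - x) ^ k < Real.exp (-c * x) :=
  calc (1 - x) ^ k ≤ Real.exp (-x) ^ k :=
        pow_le_pow_left₀ (by linarith) (Real.one_sub_le_exp_neg x) k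
    _ = Real.exp (-k * x) := by rw [← Real.exp_nat_mul]; ring_nf
    _ < Real.exp (-c * x) := Real.exp_lt_exp.mpr (by nlinarith)

theorem MeasurableSpace.measurableSet_iSup_comap_not_and {Ω ι : Type*} {K : ι → Ω → Bool}
    {S : Set ι} {i j : ι} (hi : i ∈ S) (hj : j ∈ S) :
    MeasurableSet[⨆ k ∈ S, MeasurableSpace.comap (K k) inferInstance]
      {ω | ¬(K i ω = true ∧ K j ω = true)} := by
  have h : ∀ k ∈ S, MeasurableSet[⨆ k ∈ S, MeasurableSpace.comap (K k) inferInstance]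
      {ω | K k ω = true} := fun k hk =>
    le_iSup₂ (f := fun k (_ : k ∈ S) => MeasurableSpace.comap (K k) inferInstance) k hk _
      ⟨{true}, measurableSet_singleton true, rfl⟩
  exact ((h i hi).inter (h j hj)).compl

theorem Sym2.pairwiseDisjoint_mk_mk {α : Type*} (u v : α) :
    {w | u ≠ w ∧ v ≠ w}.PairwiseDisjoint fun w => ({s(u, w), s(v, w)} : Set (Sym2 α)) := by
  rintro w ⟨huw, hvw⟩ w' ⟨huw', hvw'⟩ hww'
  simp only [Set.disjoint_left, Set.mem_insert_iff, Set.mem_singleton_iff]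
  rintro e (rfl | rfl) <;> simp [huw, hvw, huw', hvw', hww', eq_comm]

theorem ProbabilityTheory.iIndepFun.measure_forall_not_and_eq_pow {Ω α : Type*}
    {mΩ : MeasurableSpace Ω} {μ : Measure Ω} [IsProbabilityMeasure μ] {K : Sym2 α → Ω → Bool}
    (hmeas : ∀ e, Measurable (K e)) (hind : iIndepFun K μ) {u v : α} {p : ℝ} (hp : 0 ≤ p)
    (hprob : ∀ e, e ≠ s(u, v) → μ {ω | K e ω = true} = ENNReal.ofReal p)
    (T : Finset α) (hT : ∀ w ∈ T, u ≠ v ∧ u ≠ w ∧ v ≠ w) :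
    μ {ω | ∀ w ∈ T, ¬(K s(u, w) ω = true ∧ K s(v, w) ω = true)} =
      ENNReal.ofReal (1 - p ^ 2) ^ T.card := by
  have hfactor : ∀ w ∈ T, μ {ω | ¬(K s(u, w) ω = true ∧ K s(v, w) ω = true)} =
      ENNReal.ofReal (1 - p ^ 2) := fun w hw => by
    obtain ⟨huv, huw, hvw⟩ := hT w hw
    refine hind.measure_not_and_eq hmeas ?_ hp (hprob _ ?_) (hprob _ ?_)
    all_goals simp [huv, huw, hvw, eq_comm]
  have hset : {ω | ∀ w ∈ T, ¬(K s(u, w) ω = true ∧ K s(v, w) ω = true)} =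
      ⋂ w ∈ T, {ω | ¬(K s(u, w) ω = true ∧ K s(v, w) ω = true)} := by
    ext ω; simp
  rw [← Finset.prod_const, ← Finset.prod_congr rfl hfactor, hset]
  exact hind.iIndep.measure_biInter_eq_prod_of_pairwiseDisjoint
    (fun e => (hmeas e).comap_le) T
    ((Sym2.pairwiseDisjoint_mk_mk u v).subset fun w hw => (hT w hw).2)
    fun w _ => MeasurableSpace.measurableSet_iSup_comap_not_and (by simp) (by simp)

theorem NegTriangle.ne {n : ℕ} {G : SimpleGraph (Fin n)} {f : Fin n → Fin n → ℤ} {u v w : Fin n}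
    (h : NegTriangle G f u v w) : u ≠ v ∧ u ≠ w ∧ v ≠ w :=
  ⟨h.1.ne, h.2.1.ne, h.2.2.1.ne⟩

theorem stmt11_general {n : ℕ} {Ω : Type*} [MeasureSpace Ω] [IsProbabilityMeasure (ℙ : Measure Ω)]
    (hn : 2 ≤ n)
    (G : SimpleGraph (Fin n)) (f : Fin n → Fin n → ℤ)
    (u v : Fin n) (i : ℕ)
    (h60 : 60 * 2 ^ i * Real.log n ≤ n)
    (q : ℝ) (hq : q = Real.sqrt (60 * 2 ^ i * Real.log n / n))
    (hmany : (n : ℝ) / 2 ^ (i + 1) < (Nat.card {w : Fin n // NegTriangle G f u v w} : ℝ))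
    (K : Sym2 (Fin n) → Ω → Bool) (hmeas : ∀ e, Measurable (K e))
    (hind : iIndepFun K ℙ)
    (hprob : ∀ e : Sym2 (Fin n), e ≠ s(u, v) →
      ℙ {ω | K e ω = true} = ENNReal.ofReal q) :
    ℙ {ω | ∀ w : Fin n, ¬(NegTriangle G f u v w ∧
        K s(u, w) ω = true ∧ K s(v, w) ω = true)} <
        ENNReal.ofReal (Real.exp (-((n : ℝ) / 2 ^ (i + 1)) * q ^ 2)) ∧
      Real.exp (-((n : ℝ) / 2 ^ (i + 1)) * q ^ 2) ≤ 1 / (n : ℝ) ^ 30 := by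
  classical
  have hlog : 0 < Real.log n := Real.log_pos (by exact_mod_cast hn)
  have hq2 : q ^ 2 = 60 * 2 ^ i * Real.log n / n := by
    rw [hq, Real.sq_sqrt (by positivity)]
  have hexp : -((n : ℝ) / 2 ^ (i + 1)) * q ^ 2 = -(30 * Real.log n) := by
    rw [hq2]; field_simp; ring
  refine ⟨?_, ?_⟩
  · set T := Finset.univ.filter (NegTriangle G f u v)
    have hset : {ω | ∀ w : Fin n, ¬(NegTriangle G f u v w ∧
        K s(u, w) ω = true ∧ K s(v, w) ω = true)} =
        {ω | ∀ w ∈ T, ¬(K s(u, w) ω = true ∧ K s(v, w) ω = true)} := by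
      ext ω; simp [T]
    have hq21 : q ^ 2 ≤ 1 := by rwa [hq2, div_le_one (by positivity)]
    have hcard : (n : ℝ) / 2 ^ (i + 1) < T.card := by
      rwa [Nat.card_eq_fintype_card, Fintype.card_subtype] at hmany
    rw [hset, hind.measure_forall_not_and_eq_pow hmeas (hq ▸ Real.sqrt_nonneg _) hprob T
        fun w hw => (Finset.mem_filter.mp hw).2.ne,
      ← ENNReal.ofReal_pow (by linarith), ENNReal.ofReal_lt_ofReal_iff (Real.exp_pos _)]
    exact Real.one_sub_pow_lt_exp_neg_mul (by rw [hq2]; positivity) hq21 hcard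
  · rw [hexp, Real.exp_neg, ← Real.log_rpow (by positivity), Real.exp_log (by positivity),
      one_div]
    norm_cast

theorem stmt11 {n : ℕ} {Ω : Type*} [MeasureSpace Ω] [IsProbabilityMeasure (ℙ : Measure Ω)]
    (hn : 2 ≤ n)
    (G : SimpleGraph (Fin n)) (f : Fin n → Fin n → ℤ) (hf : ∀ a b, f a b = f b a)
    (u v : Fin n) (i : ℕ)
    (h60 : 60 * 2 ^ i * Real.log n ≤ n)
    (q : ℝ) (hq : q = Real.sqrt (60 * 2 ^ i * Real.log n / n))
    (hmany : (n : ℝ) / 2 ^ (i + 1) < (Nat.card {w : Fin n // NegTriangle G f u v w} : ℝ))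
    (K : Sym2 (Fin n) → Ω → Bool) (hmeas : ∀ e, Measurable (K e))
    (hind : iIndepFun K ℙ)
    (hprob : ∀ e : Sym2 (Fin n), e ≠ s(u, v) →
      ℙ {ω | K e ω = true} = ENNReal.ofReal q)
    (hkeep : ∀ ω, K s(u, v) ω = true) :
    ℙ {ω | ∀ w : Fin n, ¬(NegTriangle G f u v w ∧
        K s(u, w) ω = true ∧ K s(v, w) ω = true)} <
        ENNReal.ofReal (Real.exp (-((n : ℝ) / 2 ^ (i + 1)) * q ^ 2)) ∧
      Real.exp (-((n : ℝ) / 2 ^ (i + 1)) * q ^ 2) ≤ 1 / (n : ℝ) ^ 30 :=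
  stmt11_general hn G f u v i h60 q hq hmany K hmeas hind hprob
end
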